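/- The EXP4 algorithm run on a fixed policy set Θ of N distributions over a finite outcome set, with learning rates η_t = min{1, √(log N / (e C(Θ) t))}, satisfies the regret bound R_T ≤ 2 max{√(e C(Θ) T log N), log N} against any adversarial sequence of losses in [0,1]. -/

import Mathlib

/-!
EXP4 is exponential weights over the policies, fed with the importance-weighted estimates
`ℓ̂_t(i) = θ_i(X_t) ℓ_t(X_t) / q_t(X_t)`, where `q_t = ∑_i p_t(i) θ_i` is the law of `X_t`.
Along every outcome sequence, the potential `(1/η) log (mean_i exp (-η L̂_t(i)))` is nondecreasing
in `η` (power means), so with decreasing rates it telescopes to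
`∑_t ⟨p_t, ℓ̂_t⟩ ≤ L̂_T(i₀) + log N / η_T + (3/4) ∑_t η_t ∑_i p_t(i) (ℓ̂_t(i) - ℓ_t(X_t))²`.
Shifting by the observed loss `ℓ_t(X_t)` is what makes the last term small: given the past, its
expectation is at most `∑_i p_t(i) χ²(θ_i ‖ q_t) ≤ C(Θ)`, while `ℓ̂_t` is unbiased up to outcomes
of probability zero. Hence the regret is at most `log N / η_T + (3/4) C(Θ) ∑_t η_t`, which the
chosen rates bound through `∑_{t ≤ T} t^{-1/2} ≤ 2 √T` and `√2 + 3/(2e) ≤ 2`. If `C(Θ) = 0` all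
policies coincide and the regret vanishes.
-/

open Finset

noncomputable section

/-- Cumulative importance-weighted loss estimates of EXP4 (0-indexed rounds):
`exp4Lhat θ ℓ η x t i = ∑_{s<t} ℓ̂_s(i)` where
`ℓ̂_s(i) = θ i (x s) · ℓ s (x s) / ∑_j p_s(j) θ j (x s)` and
`p_s(j) ∝ exp (−η s · exp4Lhat θ ℓ η x s j)`, with `x` the sequence of drawn outcomes. -/
def exp4Lhat {N K : ℕ} (θ : Fin N → Fin K → ℝ) (ℓ : ℕ → Fin K → ℝ) (η : ℕ → ℝ)
    (x : ℕ → Fin K) : ℕ → Fin N → ℝ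
  | 0, _ => 0
  | t + 1, i =>
      exp4Lhat θ ℓ η x t i +
        θ i (x t) * ℓ t (x t) /
          ∑ j, (Real.exp (-η t * exp4Lhat θ ℓ η x t j) /
                  ∑ m, Real.exp (-η t * exp4Lhat θ ℓ η x t m)) * θ j (x t)

/-- The exponential-weights distribution over policies played by EXP4 at round `t`. -/
def exp4p {N K : ℕ} (θ : Fin N → Fin K → ℝ) (ℓ : ℕ → Fin K → ℝ) (η : ℕ → ℝ)
    (x : ℕ → Fin K) (t : ℕ) (i : Fin N) : ℝ :=
  Real.exp (-η t * exp4Lhat θ ℓ η x t i) /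
    ∑ m, Real.exp (-η t * exp4Lhat θ ℓ η x t m)

/-- The mixture distribution over outcomes induced by EXP4 at round `t`. -/
def exp4mix {N K : ℕ} (θ : Fin N → Fin K → ℝ) (ℓ : ℕ → Fin K → ℝ) (η : ℕ → ℝ)
    (x : ℕ → Fin K) (t : ℕ) (a : Fin K) : ℝ :=
  ∑ i, exp4p θ ℓ η x t i * θ i a

/-- Extension of a finite outcome sequence to an infinite one. -/
def extSeq {K T : ℕ} [NeZero K] (xs : Fin T → Fin K) (n : ℕ) : Fin K :=
  if h : n < T then xs ⟨n, h⟩ else default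

open Real

section ExpWeights

variable {ι : Type*} [Fintype ι] [Nonempty ι]

def expWeights (η : ℝ) (L : ι → ℝ) (i : ι) : ℝ :=
  exp (-η * L i) / ∑ j, exp (-η * L j)

lemma sum_exp_pos (η : ℝ) (L : ι → ℝ) : 0 < ∑ j, exp (-η * L j) :=
  Finset.sum_pos (fun _ _ => exp_pos _) univ_nonempty

lemma expWeights_pos (η : ℝ) (L : ι → ℝ) (i : ι) : 0 < expWeights η L i :=
  div_pos (exp_pos _) (sum_exp_pos η L)

lemma sum_expWeights (η : ℝ) (L : ι → ℝ) : ∑ i, expWeights η L i = 1 := by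
  simp only [expWeights]
  rw [← Finset.sum_div, div_self (sum_exp_pos η L).ne']

lemma exp_neg_le_one_sub_add {z : ℝ} (hz : -1 ≤ z) : exp (-z) ≤ 1 - z + 3 / 4 * z ^ 2 := by
  rcases le_total z 1 with hz1 | hz1
  · have hb := Real.exp_bound (x := -z) (by rw [abs_le]; constructor <;> linarith) two_pos
    rw [show ∑ m ∈ range 2, (-z) ^ m / (m.factorial : ℝ) = 1 - z by
      simp [Finset.sum_range_succ]; ring] at hb
    norm_num [Nat.factorial] at hb
    nlinarith [(abs_le.1 hb).2]
  · have : exp (-z) ≤ exp (-1) := exp_le_exp.2 (by linarith)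
    have : exp (-1) < 3 / 4 := by
      rw [exp_neg, inv_lt_comm₀ (exp_pos 1) (by norm_num)]
      linarith [exp_one_gt_d9]
    nlinarith

/-- Any shift `c ≤ 1` keeps `a * (h i - c) ≥ -1`, where `exp_neg_le_one_sub_add` applies. -/
lemma log_sum_mul_exp_neg_le {p h : ι → ℝ} (hp : ∀ i, 0 < p i) (hp1 : ∑ i, p i = 1)
    (hh : ∀ i, 0 ≤ h i) {a c : ℝ} (ha : 0 ≤ a) (ha1 : a ≤ 1) (hc : c ≤ 1) :
    log (∑ i, p i * exp (-a * h i)) ≤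
      -a * ∑ i, p i * h i + 3 / 4 * a ^ 2 * ∑ i, p i * (h i - c) ^ 2 := by
  set Y := ∑ i, p i * exp (-(a * (h i - c)))
  have hY : 0 < Y := Finset.sum_pos (fun i _ => mul_pos (hp i) (exp_pos _)) univ_nonempty
  have hsplit : ∑ i, p i * exp (-a * h i) = exp (-(a * c)) * Y := by
    rw [Finset.mul_sum]
    refine Finset.sum_congr rfl fun i _ => ?_
    rw [mul_left_comm, ← exp_add]
    ring_nf
  have hYle : Y ≤ ∑ i, p i * (1 - a * (h i - c) + 3 / 4 * (a * (h i - c)) ^ 2) := by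
    refine Finset.sum_le_sum fun i _ => mul_le_mul_of_nonneg_left ?_ (hp i).le
    refine exp_neg_le_one_sub_add ?_
    nlinarith [hh i]
  have hexpand : ∑ i, p i * (1 - a * (h i - c) + 3 / 4 * (a * (h i - c)) ^ 2) =
      1 - a * (∑ i, p i * h i - c) + 3 / 4 * a ^ 2 * ∑ i, p i * (h i - c) ^ 2 := by
    have hterm : ∀ i, p i * (1 - a * (h i - c) + 3 / 4 * (a * (h i - c)) ^ 2) =
        p i - a * (p i * h i) + a * c * p i + 3 / 4 * a ^ 2 * (p i * (h i - c) ^ 2) :=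
      fun i => by ring
    simp only [hterm, Finset.sum_add_distrib, Finset.sum_sub_distrib, ← Finset.mul_sum, hp1]
    ring
  rw [hsplit, log_mul (exp_pos _).ne' hY.ne', log_exp]
  linarith [log_le_sub_one_of_pos hY]

end ExpWeights

section Potential

variable {ι : Type*} [Fintype ι] [Nonempty ι]

def expWeightsPotential (a : ℝ) (L : ι → ℝ) : ℝ :=
  log ((∑ i, exp (-a * L i)) / Fintype.card ι) / a

lemma expWeightsPotential_zero (a : ℝ) : expWeightsPotential a (fun _ : ι => 0) = 0 := by
  simp [expWeightsPotential]

lemma neg_sub_le_expWeightsPotential {a : ℝ} (ha : 0 < a) (L : ι → ℝ) (i : ι) :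
    -L i - log (Fintype.card ι) / a ≤ expWeightsPotential a L := by
  have hcard : (0 : ℝ) < Fintype.card ι := Nat.cast_pos.2 Fintype.card_pos
  have hle : exp (-a * L i) ≤ ∑ j, exp (-a * L j) :=
    Finset.single_le_sum (f := fun j => exp (-a * L j)) (fun _ _ => (exp_pos _).le)
      (Finset.mem_univ i)
  have hlog : -a * L i ≤ log (∑ j, exp (-a * L j)) := by
    rw [← log_exp (-a * L i)]
    exact log_le_log (exp_pos _) hle
  rw [expWeightsPotential, log_div (sum_exp_pos a L).ne' hcard.ne', le_div_iff₀ ha]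
  have : (-L i - log (Fintype.card ι) / a) * a = -a * L i - log (Fintype.card ι) := by
    field_simp
  linarith

lemma expWeightsPotential_add {a : ℝ} (L h : ι → ℝ) :
    expWeightsPotential a (L + h) =
      expWeightsPotential a L + log (∑ i, expWeights a L i * exp (-a * h i)) / a := by
  have hcard : (0 : ℝ) < Fintype.card ι := Nat.cast_pos.2 Fintype.card_pos
  have hfactor : ∑ i, exp (-a * (L + h) i) =
      (∑ i, exp (-a * L i)) * ∑ i, expWeights a L i * exp (-a * h i) := by
    rw [Finset.mul_sum]
    refine Finset.sum_congr rfl fun i _ => ?_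
    rw [expWeights, Pi.add_apply, mul_add, exp_add]
    field_simp [(sum_exp_pos a L).ne']
  have hpos : 0 < ∑ i, expWeights a L i * exp (-a * h i) :=
    Finset.sum_pos (fun i _ => mul_pos (expWeights_pos a L i) (exp_pos _)) univ_nonempty
  rw [expWeightsPotential, hfactor, mul_div_right_comm,
    log_mul (div_pos (sum_exp_pos a L) hcard).ne' hpos.ne', add_div, expWeightsPotential]

/-- The power mean `a ↦ (mean_i exp (-L i) ^ a) ^ (1 / a)` is nondecreasing. -/
lemma expWeightsPotential_mono {a b : ℝ} (ha : 0 < a) (hab : a ≤ b) (L : ι → ℝ) :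
    expWeightsPotential a L ≤ expWeightsPotential b L := by
  have hb : 0 < b := ha.trans_le hab
  have hcard : (0 : ℝ) < Fintype.card ι := Nat.cast_pos.2 Fintype.card_pos
  have hmean : ∀ c, (∑ i, exp (-c * L i)) / Fintype.card ι =
      ∑ i, (Fintype.card ι : ℝ)⁻¹ * exp (-c * L i) := fun c => by
    rw [← Finset.mul_sum, div_eq_inv_mul]
  have hpow := Real.rpow_arith_mean_le_arith_mean_rpow Finset.univ
    (fun _ : ι => (Fintype.card ι : ℝ)⁻¹) (fun i => exp (-a * L i))
    (fun _ _ => by positivity) (by simp [Finset.card_univ, hcard.ne'])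
    (fun _ _ => (exp_pos _).le) ((one_le_div ha).2 hab)
  have hexp : ∀ i, exp (-a * L i) ^ (b / a) = exp (-b * L i) := fun i => by
    rw [← exp_mul]; congr 1; field_simp
  simp only [hexp, ← hmean] at hpow
  have hlog := log_le_log (rpow_pos_of_pos (div_pos (sum_exp_pos a L) hcard) _) hpow
  rw [log_rpow (div_pos (sum_exp_pos a L) hcard)] at hlog
  rw [expWeightsPotential, expWeightsPotential, div_le_div_iff₀ ha hb]
  calc log ((∑ i, exp (-a * L i)) / Fintype.card ι) * b
      = a * (b / a * log ((∑ i, exp (-a * L i)) / Fintype.card ι)) := by field_simp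
    _ ≤ a * log ((∑ i, exp (-b * L i)) / Fintype.card ι) := by gcongr
    _ = _ := mul_comm _ _

end Potential

section Regret

variable {ι : Type*} [Fintype ι] [Nonempty ι] {η : ℕ → ℝ} {h : ℕ → ι → ℝ} {c : ℕ → ℝ}

lemma expWeightsPotential_le (hη : ∀ t, 0 < η t) (hη1 : ∀ t, η t ≤ 1) (hanti : Antitone η)
    (hh : ∀ t i, 0 ≤ h t i) (hc : ∀ t, c t ≤ 1) (T : ℕ) :
    expWeightsPotential (η T) (fun i => ∑ s ∈ range T, h s i) ≤
      -∑ t ∈ range T, ∑ i, expWeights (η t) (fun i => ∑ s ∈ range t, h s i) i * h t i +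
        3 / 4 * ∑ t ∈ range T, η t *
          ∑ i, expWeights (η t) (fun i => ∑ s ∈ range t, h s i) i * (h t i - c t) ^ 2 := by
  induction T with
  | zero => simp [expWeightsPotential_zero]
  | succ T ih =>
    set L : ι → ℝ := fun i => ∑ s ∈ range T, h s i
    have hL : (fun i => ∑ s ∈ range (T + 1), h s i) = L + h T := by
      ext i; simp [L, Finset.sum_range_succ]
    have hstep := log_sum_mul_exp_neg_le (expWeights_pos (η T) L) (sum_expWeights (η T) L)
      (hh T) (hη T).le (hη1 T) (hc T)
    have hdiv : log (∑ i, expWeights (η T) L i * exp (-η T * h T i)) / η T ≤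
        -∑ i, expWeights (η T) L i * h T i +
          3 / 4 * η T * ∑ i, expWeights (η T) L i * (h T i - c T) ^ 2 := by
      rw [div_le_iff₀ (hη T)]
      linarith
    have hmono := expWeightsPotential_mono (hη (T + 1)) (hanti T.le_succ) (L + h T)
    have hadd := expWeightsPotential_add (a := η T) L (h T)
    rw [hL, Finset.sum_range_succ, Finset.sum_range_succ]
    linarith

theorem expWeights_regret_le (hη : ∀ t, 0 < η t) (hη1 : ∀ t, η t ≤ 1) (hanti : Antitone η)
    (hh : ∀ t i, 0 ≤ h t i) (hc : ∀ t, c t ≤ 1) (T : ℕ) (i₀ : ι) :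
    ∑ t ∈ range T, ∑ i, expWeights (η t) (fun i => ∑ s ∈ range t, h s i) i * h t i ≤
      ∑ t ∈ range T, h t i₀ + log (Fintype.card ι) / η T +
        3 / 4 * ∑ t ∈ range T, η t *
          ∑ i, expWeights (η t) (fun i => ∑ s ∈ range t, h s i) i * (h t i - c t) ^ 2 := by
  have := neg_sub_le_expWeightsPotential (hη T) (fun i => ∑ s ∈ range T, h s i) i₀
  linarith [expWeightsPotential_le hη hη1 hanti hh hc T]

end Regret

section ChiSq

variable {ι α : Type*} [Fintype ι]

def mixture (τ : ι → ℝ) (θ : ι → α → ℝ) (a : α) : ℝ := ∑ j, τ j * θ j a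

/-- Points where `Q a = 0` contribute nothing, since `x / 0 = 0`. -/
def chiSq [Fintype α] (P Q : α → ℝ) : ℝ := ∑ a, Q a * (P a / Q a - 1) ^ 2

def chiSqInfo [Fintype α] (τ : ι → ℝ) (θ : ι → α → ℝ) : ℝ := ∑ i, τ i * chiSq (θ i) (mixture τ θ)

def chiSqCapacity [Fintype α] (θ : ι → α → ℝ) : ℝ :=
  sSup {v | ∃ τ : ι → ℝ, (∀ i, 0 ≤ τ i) ∧ ∑ i, τ i = 1 ∧ v = chiSqInfo τ θ}

variable {τ : ι → ℝ} {θ : ι → α → ℝ}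

lemma mixture_nonneg (hτ : ∀ i, 0 ≤ τ i) (hθ : ∀ i a, 0 ≤ θ i a) (a : α) :
    0 ≤ mixture τ θ a :=
  Finset.sum_nonneg fun j _ => mul_nonneg (hτ j) (hθ j a)

lemma mul_le_mixture (hτ : ∀ i, 0 ≤ τ i) (hθ : ∀ i a, 0 ≤ θ i a) (i : ι) (a : α) :
    τ i * θ i a ≤ mixture τ θ a :=
  Finset.single_le_sum (f := fun j => τ j * θ j a) (fun j _ => mul_nonneg (hτ j) (hθ j a))
    (Finset.mem_univ i)

variable [Fintype α]

lemma sum_mixture (hτ1 : ∑ i, τ i = 1) (hθ1 : ∀ i, ∑ a, θ i a = 1) :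
    ∑ a, mixture τ θ a = 1 := by
  simp only [mixture]
  rw [Finset.sum_comm]
  simp only [← Finset.mul_sum, hθ1, mul_one, hτ1]

lemma chiSqInfo_nonneg (hτ : ∀ i, 0 ≤ τ i) (hθ : ∀ i a, 0 ≤ θ i a) : 0 ≤ chiSqInfo τ θ :=
  Finset.sum_nonneg fun i _ => mul_nonneg (hτ i) <|
    Finset.sum_nonneg fun a _ => mul_nonneg (mixture_nonneg hτ hθ a) (sq_nonneg _)

lemma mul_mul_div_sub_one_sq_le {t x m : ℝ} (ht : 0 ≤ t) (ht1 : t ≤ 1) (hx : 0 ≤ x)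
    (htx : t * x ≤ m) : t * (m * (x / m - 1) ^ 2) ≤ x + m := by
  rcases (mul_nonneg ht hx).trans htx |>.eq_or_lt with hm | hm
  · simp [← hm, hx]
  · obtain ⟨r, rfl⟩ : ∃ r, x = r * m := ⟨x / m, by field_simp⟩
    have hr : r = r * m / m := by field_simp
    rw [← hr]
    have htr : t * r ≤ 1 := by nlinarith
    nlinarith [mul_nonneg ht hm.le, mul_nonneg (mul_nonneg ht hm.le) (sq_nonneg (r - 1))]

lemma chiSqInfo_le (hτ : ∀ i, 0 ≤ τ i) (hτ1 : ∑ i, τ i = 1) (hθ : ∀ i a, 0 ≤ θ i a)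
    (hθ1 : ∀ i, ∑ a, θ i a = 1) : chiSqInfo τ θ ≤ 2 * Fintype.card ι := by
  have hτle : ∀ i, τ i ≤ 1 := fun i =>
    hτ1 ▸ Finset.single_le_sum (fun j _ => hτ j) (Finset.mem_univ i)
  calc chiSqInfo τ θ ≤ ∑ i : ι, ∑ a, (θ i a + mixture τ θ a) := by
        refine Finset.sum_le_sum fun i _ => ?_
        rw [chiSq, Finset.mul_sum]
        exact Finset.sum_le_sum fun a _ =>
          mul_mul_div_sub_one_sq_le (hτ i) (hτle i) (hθ i a) (mul_le_mixture hτ hθ i a)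
    _ = 2 * Fintype.card ι := by
        simp only [Finset.sum_add_distrib, hθ1, sum_mixture hτ1 hθ1, Finset.sum_const,
          Finset.card_univ, nsmul_eq_mul]
        ring

lemma eq_mixture_of_chiSqInfo_eq_zero (hτ : ∀ i, 0 < τ i) (hθ : ∀ i a, 0 ≤ θ i a)
    (h0 : chiSqInfo τ θ = 0) (i : ι) : θ i = mixture τ θ := by
  have hτ' : ∀ i, 0 ≤ τ i := fun i => (hτ i).le
  have hterm : ∀ a, mixture τ θ a * (θ i a / mixture τ θ a - 1) ^ 2 = 0 := by
    have hi := (Finset.sum_eq_zero_iff_of_nonneg fun j _ => mul_nonneg (hτ' j) <|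
      Finset.sum_nonneg fun a _ => mul_nonneg (mixture_nonneg hτ' hθ a) (sq_nonneg _)).1 h0 i
      (Finset.mem_univ i)
    have hchi := (mul_eq_zero.1 hi).resolve_left (hτ i).ne'
    exact fun a => (Finset.sum_eq_zero_iff_of_nonneg fun a _ =>
      mul_nonneg (mixture_nonneg hτ' hθ a) (sq_nonneg _)).1 hchi a (Finset.mem_univ a)
  ext a
  rcases (mixture_nonneg hτ' hθ a).eq_or_lt with hm | hm
  · have := mul_le_mixture hτ' hθ i a
    rw [← hm] at this ⊢
    exact le_antisymm (nonpos_of_mul_nonpos_right this (hτ i)) (hθ i a)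
  · have := (mul_eq_zero.1 (hterm a)).resolve_left hm.ne'
    have := sub_eq_zero.1 (pow_eq_zero_iff two_ne_zero |>.1 this)
    field_simp at this
    exact this

lemma bddAbove_chiSqInfo (hθ : ∀ i a, 0 ≤ θ i a) (hθ1 : ∀ i, ∑ a, θ i a = 1) :
    BddAbove {v | ∃ τ : ι → ℝ, (∀ i, 0 ≤ τ i) ∧ ∑ i, τ i = 1 ∧ v = chiSqInfo τ θ} :=
  ⟨2 * Fintype.card ι, by
    rintro _ ⟨τ, hτ, hτ1, rfl⟩
    exact chiSqInfo_le hτ hτ1 hθ hθ1⟩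

lemma chiSqInfo_le_chiSqCapacity (hτ : ∀ i, 0 ≤ τ i) (hτ1 : ∑ i, τ i = 1)
    (hθ : ∀ i a, 0 ≤ θ i a) (hθ1 : ∀ i, ∑ a, θ i a = 1) : chiSqInfo τ θ ≤ chiSqCapacity θ :=
  le_csSup (bddAbove_chiSqInfo hθ hθ1) ⟨τ, hτ, hτ1, rfl⟩

lemma sum_inv_card [Nonempty ι] : ∑ _i : ι, (Fintype.card ι : ℝ)⁻¹ = 1 := by
  simp [Finset.card_univ]

lemma chiSqCapacity_nonneg [Nonempty ι] (hθ : ∀ i a, 0 ≤ θ i a)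
    (hθ1 : ∀ i, ∑ a, θ i a = 1) : 0 ≤ chiSqCapacity θ :=
  (chiSqInfo_nonneg (fun _ => by positivity) hθ).trans
    (chiSqInfo_le_chiSqCapacity (fun _ => by positivity) sum_inv_card hθ hθ1)

lemma eq_of_chiSqCapacity_eq_zero [Nonempty ι] (hθ : ∀ i a, 0 ≤ θ i a)
    (hθ1 : ∀ i, ∑ a, θ i a = 1) (h0 : chiSqCapacity θ = 0) (i j : ι) : θ i = θ j := by
  have hu : ∀ _ : ι, (0 : ℝ) < (Fintype.card ι : ℝ)⁻¹ := fun _ => by positivity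
  have hinfo : chiSqInfo (fun _ => (Fintype.card ι : ℝ)⁻¹) θ = 0 :=
    le_antisymm (h0 ▸ chiSqInfo_le_chiSqCapacity (fun i => (hu i).le) sum_inv_card hθ hθ1)
      (chiSqInfo_nonneg (fun i => (hu i).le) hθ)
  rw [eq_mixture_of_chiSqInfo_eq_zero hu hθ hinfo i, eq_mixture_of_chiSqInfo_eq_zero hu hθ hinfo j]

end ChiSq

section ImportanceWeighting

variable {ι α : Type*} [Fintype ι] [Fintype α] {p : ι → ℝ} {θ : ι → α → ℝ} {ℓ : α → ℝ}

def importanceWeighted (p : ι → ℝ) (θ : ι → α → ℝ) (ℓ : α → ℝ) (a : α) (i : ι) : ℝ :=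
  θ i a * ℓ a / mixture p θ a

lemma sum_mixture_mul_importanceWeighted_le (hθ : ∀ i a, 0 ≤ θ i a)
    (hℓ : ∀ a, 0 ≤ ℓ a) (i : ι) :
    ∑ a, mixture p θ a * importanceWeighted p θ ℓ a i ≤ ∑ a, θ i a * ℓ a := by
  refine Finset.sum_le_sum fun a _ => ?_
  rcases eq_or_ne (mixture p θ a) 0 with hm | hm
  · simpa [hm] using mul_nonneg (hθ i a) (hℓ a)
  · rw [importanceWeighted, mul_div_cancel₀ _ hm]

lemma sum_mixture_mul_sum_importanceWeighted :
    ∑ a, mixture p θ a * ∑ i, p i * importanceWeighted p θ ℓ a i =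
      ∑ i, p i * ∑ a, θ i a * ℓ a := by
  have hterm : ∀ a, mixture p θ a * ∑ i, p i * importanceWeighted p θ ℓ a i =
      mixture p θ a * ℓ a := fun a => by
    rcases eq_or_ne (mixture p θ a) 0 with hm | hm
    · simp [hm]
    · congr 1
      simp only [importanceWeighted, mul_div_assoc', ← Finset.sum_div, ← mul_assoc,
        ← Finset.sum_mul]
      exact mul_div_cancel_left₀ _ hm
  rw [Finset.sum_congr rfl fun a _ => hterm a]
  simp only [mixture, Finset.mul_sum, Finset.sum_mul]
  rw [Finset.sum_comm]
  exact Finset.sum_congr rfl fun i _ => Finset.sum_congr rfl fun a _ => by ring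

lemma sum_mixture_mul_sum_sq_le (hp : ∀ i, 0 ≤ p i) (hθ : ∀ i a, 0 ≤ θ i a)
    (hℓ : ∀ a, |ℓ a| ≤ 1) :
    ∑ a, mixture p θ a * ∑ i, p i * (importanceWeighted p θ ℓ a i - ℓ a) ^ 2 ≤
      chiSqInfo p θ := by
  have hsq : ∀ i a, (importanceWeighted p θ ℓ a i - ℓ a) ^ 2 ≤
      (θ i a / mixture p θ a - 1) ^ 2 := fun i a => by
    rw [importanceWeighted, mul_comm, mul_div_assoc, ← mul_sub_one, mul_pow]
    exact mul_le_of_le_one_left (sq_nonneg _) ((sq_le_one_iff_abs_le_one _).2 (hℓ a))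
  calc _ ≤ ∑ a, mixture p θ a * ∑ i, p i * (θ i a / mixture p θ a - 1) ^ 2 := by
        refine Finset.sum_le_sum fun a _ => mul_le_mul_of_nonneg_left ?_ (mixture_nonneg hp hθ a)
        exact Finset.sum_le_sum fun i _ => mul_le_mul_of_nonneg_left (hsq i a) (hp i)
    _ = chiSqInfo p θ := by
        simp only [chiSqInfo, chiSq, Finset.mul_sum]
        rw [Finset.sum_comm]
        exact Finset.sum_congr rfl fun i _ => Finset.sum_congr rfl fun a _ => by ring

end ImportanceWeighting

section Surrogate

variable {ι α : Type*} [Fintype ι] [Fintype α] {p : ι → ℝ} {θ : ι → α → ℝ} {ℓ : α → ℝ}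

/-- The per-round term after outcome `a`: its sum over rounds bounds the regret pathwise, and
its conditional expectation is controlled by the χ²-information. -/
def iwSurrogate (p : ι → ℝ) (θ : ι → α → ℝ) (ℓ : α → ℝ) (η : ℝ) (i₀ : ι) (a : α) : ℝ :=
  ∑ i, p i * ∑ b, θ i b * ℓ b - ∑ i, p i * importanceWeighted p θ ℓ a i +
    importanceWeighted p θ ℓ a i₀ +
    3 / 4 * η * ∑ i, p i * (importanceWeighted p θ ℓ a i - ℓ a) ^ 2

lemma sum_mixture_mul_iwSurrogate_le (hp : ∀ i, 0 ≤ p i) (hp1 : ∑ i, p i = 1)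
    (hθ : ∀ i a, 0 ≤ θ i a) (hθ1 : ∀ i, ∑ a, θ i a = 1) (hℓ : ∀ a, 0 ≤ ℓ a ∧ ℓ a ≤ 1)
    {η : ℝ} (hη : 0 ≤ η) (i₀ : ι) :
    ∑ a, mixture p θ a * iwSurrogate p θ ℓ η i₀ a ≤
      ∑ a, θ i₀ a * ℓ a + 3 / 4 * η * chiSqInfo p θ := by
  have hest := sum_mixture_mul_importanceWeighted_le hθ (fun a => (hℓ a).1) i₀ (p := p)
  have hsq := sum_mixture_mul_sum_sq_le hp hθ fun a => abs_le.2 ⟨by linarith [hℓ a], (hℓ a).2⟩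
  simp only [iwSurrogate, mul_add, mul_sub, Finset.sum_add_distrib, Finset.sum_sub_distrib,
    ← Finset.sum_mul, sum_mixture hp1 hθ1, one_mul, sum_mixture_mul_sum_importanceWeighted]
  have : ∑ a, mixture p θ a * (3 / 4 * η * ∑ i, p i * (importanceWeighted p θ ℓ a i - ℓ a) ^ 2)
      ≤ 3 / 4 * η * chiSqInfo p θ := by
    simp only [mul_left_comm _ (3 / 4 * η), ← Finset.mul_sum]
    exact mul_le_mul_of_nonneg_left hsq (by positivity)
  linarith

end Surrogate

lemma DependsOn.update_eq {α β : Type*} {f : (ℕ → α) → β} {n : ℕ}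
    (hf : DependsOn f (Set.Iio n)) (x : ℕ → α) {T : ℕ} (hT : n ≤ T) (a : α) :
    f (Function.update x T a) = f x :=
  hf fun _ hs => Function.update_of_ne (ne_of_lt (lt_of_lt_of_le hs hT)) _ _

section PathProb

variable {K : ℕ} [NeZero K]

lemma extSeq_snoc {T : ℕ} (ys : Fin T → Fin K) (a : Fin K) :
    extSeq (Fin.snoc ys a : Fin (T + 1) → Fin K) = Function.update (extSeq ys) T a := by
  ext s
  rcases lt_trichotomy s T with hs | rfl | hs
  · rw [Function.update_of_ne hs.ne]
    simp [extSeq, hs, hs.trans T.lt_succ_self, Fin.snoc, Fin.castLT]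
  · simp [extSeq, Fin.snoc]
  · rw [Function.update_of_ne hs.ne']
    simp [extSeq, hs.not_gt, (Nat.succ_le_of_lt hs).not_gt]

variable {q : (ℕ → Fin K) → ℕ → Fin K → ℝ}

/-- The probability of the outcome sequence `xs` when outcome `t` is drawn from `q x t`, which
may depend on the earlier outcomes `x 0, …, x (t - 1)`. -/
def pathProb (q : (ℕ → Fin K) → ℕ → Fin K → ℝ) (T : ℕ) (xs : Fin T → Fin K) : ℝ :=
  ∏ t : Fin T, q (extSeq xs) t (xs t)

lemma pathProb_nonneg (hq0 : ∀ x t a, 0 ≤ q x t a) (T : ℕ) (xs : Fin T → Fin K) :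
    0 ≤ pathProb q T xs :=
  Finset.prod_nonneg fun _ _ => hq0 _ _ _

lemma pathProb_snoc (hq : ∀ t, DependsOn (fun x => q x t) (Set.Iio t)) {T : ℕ}
    (ys : Fin T → Fin K) (a : Fin K) :
    pathProb q (T + 1) (Fin.snoc ys a) = pathProb q T ys * q (extSeq ys) T a := by
  rw [pathProb, Fin.prod_univ_castSucc, extSeq_snoc, Fin.snoc_last, Fin.val_last,
    congrFun ((hq T).update_eq _ le_rfl a) a]
  congr 1
  refine Finset.prod_congr rfl fun t _ => ?_
  rw [Fin.snoc_castSucc, Fin.val_castSucc,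
    congrFun ((hq t).update_eq _ t.isLt.le a) (ys t)]

lemma sum_pathProb_succ_mul (hq : ∀ t, DependsOn (fun x => q x t) (Set.Iio t)) (T : ℕ)
    (F : (ℕ → Fin K) → ℝ) :
    ∑ xs : Fin (T + 1) → Fin K, pathProb q (T + 1) xs * F (extSeq xs) =
      ∑ ys : Fin T → Fin K, pathProb q T ys *
        ∑ a, q (extSeq ys) T a * F (Function.update (extSeq ys) T a) := by
  rw [← (Fin.snocEquiv fun _ => Fin K).sum_comp, Fintype.sum_prod_type, Finset.sum_comm]
  refine Finset.sum_congr rfl fun ys _ => ?_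
  rw [Finset.mul_sum]
  refine Finset.sum_congr rfl fun a _ => ?_
  change pathProb q (T + 1) (Fin.snoc ys a) * F (extSeq (Fin.snoc ys a)) = _
  rw [pathProb_snoc hq, extSeq_snoc, mul_assoc]

lemma sum_pathProb (hq : ∀ t, DependsOn (fun x => q x t) (Set.Iio t))
    (hq1 : ∀ x t, ∑ a, q x t a = 1) (T : ℕ) : ∑ xs : Fin T → Fin K, pathProb q T xs = 1 := by
  induction T with
  | zero => simp [pathProb]
  | succ T ih =>
    simpa [hq1, ih] using sum_pathProb_succ_mul hq T (fun _ => 1)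

/-- The tower property of conditional expectation, for the adapted terms `f t`. -/
lemma sum_pathProb_mul_sum_le (hq : ∀ t, DependsOn (fun x => q x t) (Set.Iio t))
    (hq0 : ∀ x t a, 0 ≤ q x t a) (hq1 : ∀ x t, ∑ a, q x t a = 1)
    {f : ℕ → (ℕ → Fin K) → ℝ} {C : ℕ → ℝ} (hf : ∀ t, DependsOn (f t) (Set.Iio (t + 1)))
    (hC : ∀ t x, ∑ a, q x t a * f t (Function.update x t a) ≤ C t) (T : ℕ) :
    ∑ xs : Fin T → Fin K, pathProb q T xs * ∑ t ∈ range T, f t (extSeq xs) ≤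
      ∑ t ∈ range T, C t := by
  induction T with
  | zero => simp
  | succ T ih =>
    rw [sum_pathProb_succ_mul hq T (fun x => ∑ t ∈ range (T + 1), f t x),
      Finset.sum_range_succ]
    have hstep : ∀ ys : Fin T → Fin K,
        ∑ a, q (extSeq ys) T a *
            ∑ t ∈ range (T + 1), f t (Function.update (extSeq ys) T a) ≤
          ∑ t ∈ range T, f t (extSeq ys) + C T := fun ys => by
      have hpast : ∀ a, ∑ t ∈ range T, f t (Function.update (extSeq ys) T a) =
          ∑ t ∈ range T, f t (extSeq ys) :=
        fun a => Finset.sum_congr rfl fun t ht => (hf t).update_eq _ (Finset.mem_range.1 ht) _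
      simp only [Finset.sum_range_succ, hpast, mul_add, Finset.sum_add_distrib,
        ← Finset.sum_mul, hq1, one_mul]
      linarith [hC T (extSeq ys)]
    calc _ ≤ ∑ ys : Fin T → Fin K, pathProb q T ys * (∑ t ∈ range T, f t (extSeq ys) + C T) :=
          Finset.sum_le_sum fun ys _ =>
            mul_le_mul_of_nonneg_left (hstep ys) (pathProb_nonneg hq0 T ys)
      _ ≤ _ := by
        simp only [mul_add, Finset.sum_add_distrib, ← Finset.sum_mul, sum_pathProb hq hq1,
          one_mul]
        linarith

end PathProb

section Exp4

variable {N K : ℕ} (θ : Fin N → Fin K → ℝ) (ℓ : ℕ → Fin K → ℝ) (η : ℕ → ℝ)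

lemma exp4p_eq_expWeights (x : ℕ → Fin K) (t : ℕ) :
    exp4p θ ℓ η x t = expWeights (η t) (exp4Lhat θ ℓ η x t) := rfl

lemma exp4mix_eq_mixture (x : ℕ → Fin K) (t : ℕ) :
    exp4mix θ ℓ η x t = mixture (exp4p θ ℓ η x t) θ := rfl

lemma exp4Lhat_succ (x : ℕ → Fin K) (t : ℕ) (i : Fin N) :
    exp4Lhat θ ℓ η x (t + 1) i =
      exp4Lhat θ ℓ η x t i + importanceWeighted (exp4p θ ℓ η x t) θ (ℓ t) (x t) i := rfl

lemma exp4Lhat_eq_sum (x : ℕ → Fin K) (t : ℕ) :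
    exp4Lhat θ ℓ η x t =
      fun i => ∑ s ∈ range t, importanceWeighted (exp4p θ ℓ η x s) θ (ℓ s) (x s) i := by
  induction t with
  | zero => rfl
  | succ t ih => ext i; rw [exp4Lhat_succ, ih, Finset.sum_range_succ]

lemma dependsOn_exp4Lhat (t : ℕ) : DependsOn (fun x => exp4Lhat θ ℓ η x t) (Set.Iio t) := by
  induction t with
  | zero => exact fun _ _ _ => rfl
  | succ t ih =>
    intro x y hxy
    have hL : exp4Lhat θ ℓ η x t = exp4Lhat θ ℓ η y t :=
      ih fun s hs => hxy s (Set.mem_Iio.2 (Nat.lt_succ_of_lt hs))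
    ext i
    simp only [exp4Lhat_succ, exp4p_eq_expWeights, hL, hxy t (Set.mem_Iio.2 t.lt_succ_self)]

lemma dependsOn_exp4p (t : ℕ) : DependsOn (fun x => exp4p θ ℓ η x t) (Set.Iio t) :=
  fun _ _ hxy => by simp only [exp4p_eq_expWeights, dependsOn_exp4Lhat θ ℓ η t hxy]

lemma dependsOn_exp4mix (t : ℕ) : DependsOn (fun x => exp4mix θ ℓ η x t) (Set.Iio t) :=
  fun _ _ hxy => by simp only [exp4mix_eq_mixture, dependsOn_exp4p θ ℓ η t hxy]

end Exp4

section Exp4Pathwise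

variable {N K : ℕ} [NeZero N] {θ : Fin N → Fin K → ℝ} {ℓ : ℕ → Fin K → ℝ} {η : ℕ → ℝ}

lemma exp4mix_nonneg (hθ : ∀ i a, 0 ≤ θ i a) (x : ℕ → Fin K) (t : ℕ) (a : Fin K) :
    0 ≤ exp4mix θ ℓ η x t a :=
  mixture_nonneg (fun i => (expWeights_pos _ _ i).le) hθ a

lemma sum_exp4mix (hθ1 : ∀ i, ∑ a, θ i a = 1) (x : ℕ → Fin K) (t : ℕ) :
    ∑ a, exp4mix θ ℓ η x t a = 1 :=
  sum_mixture (sum_expWeights _ _) hθ1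

lemma exp4_sum_le_sum_iwSurrogate (hθ : ∀ i a, 0 ≤ θ i a)
    (hℓ : ∀ t a, 0 ≤ ℓ t a ∧ ℓ t a ≤ 1) (hη : ∀ t, 0 < η t) (hη1 : ∀ t, η t ≤ 1)
    (hanti : Antitone η) (x : ℕ → Fin K) (T : ℕ) (i₀ : Fin N) :
    ∑ t ∈ range T, ∑ i, exp4p θ ℓ η x t i * ∑ a, θ i a * ℓ t a ≤
      log N / η T +
        ∑ t ∈ range T, iwSurrogate (exp4p θ ℓ η x t) θ (ℓ t) (η t) i₀ (x t) := by
  have hregret := expWeights_regret_le hη hη1 hanti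
    (h := fun t => importanceWeighted (exp4p θ ℓ η x t) θ (ℓ t) (x t))
    (c := fun t => ℓ t (x t)) (fun t i => div_nonneg (mul_nonneg (hθ i _) (hℓ t _).1)
      (mixture_nonneg (fun j => (expWeights_pos _ _ j).le) hθ _))
    (fun t => (hℓ t _).2) T i₀
  simp only [← exp4Lhat_eq_sum, ← exp4p_eq_expWeights, Fintype.card_fin] at hregret
  simp only [iwSurrogate, Finset.sum_add_distrib, Finset.sum_sub_distrib, mul_assoc (3 / 4 : ℝ),
    ← Finset.mul_sum]
  linarith

end Exp4Pathwise

section Exp4Expectation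

variable {N K : ℕ} [NeZero N] [NeZero K] {θ : Fin N → Fin K → ℝ} {ℓ : ℕ → Fin K → ℝ}
  {η : ℕ → ℝ}

theorem exp4_expected_loss_le (hθ : ∀ i a, 0 ≤ θ i a) (hθ1 : ∀ i, ∑ a, θ i a = 1)
    (hℓ : ∀ t a, 0 ≤ ℓ t a ∧ ℓ t a ≤ 1) (hη : ∀ t, 0 < η t) (hη1 : ∀ t, η t ≤ 1)
    (hanti : Antitone η) {C : ℝ}
    (hC : ∀ τ : Fin N → ℝ, (∀ i, 0 ≤ τ i) → ∑ i, τ i = 1 → chiSqInfo τ θ ≤ C)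
    (T : ℕ) (i₀ : Fin N) :
    ∑ xs : Fin T → Fin K, pathProb (exp4mix θ ℓ η) T xs *
        ∑ t ∈ range T, ∑ i, exp4p θ ℓ η (extSeq xs) t i * ∑ a, θ i a * ℓ t a ≤
      ∑ t ∈ range T, ∑ a, θ i₀ a * ℓ t a + (log N / η T + 3 / 4 * C * ∑ t ∈ range T, η t) := by
  have hq := dependsOn_exp4mix θ ℓ η
  set f : ℕ → (ℕ → Fin K) → ℝ := fun t x =>
    iwSurrogate (exp4p θ ℓ η x t) θ (ℓ t) (η t) i₀ (x t)
  have hf_update : ∀ t x a, f t (Function.update x t a) =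
      iwSurrogate (exp4p θ ℓ η x t) θ (ℓ t) (η t) i₀ a := fun t x a => by
    simp only [f, (dependsOn_exp4p θ ℓ η t).update_eq x le_rfl a, Function.update_self]
  have hf : ∀ t, DependsOn (f t) (Set.Iio (t + 1)) := fun t x y hxy => by
    simp only [f, dependsOn_exp4p θ ℓ η t fun s hs => hxy s (Set.mem_Iio.2 (Nat.lt_succ_of_lt hs)),
      hxy t (Set.mem_Iio.2 t.lt_succ_self)]
  have hcond : ∀ t x, ∑ a, exp4mix θ ℓ η x t a * f t (Function.update x t a) ≤
      ∑ a, θ i₀ a * ℓ t a + 3 / 4 * C * η t := fun t x => by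
    have hp : ∀ i, 0 ≤ exp4p θ ℓ η x t i := fun i => (expWeights_pos _ _ i).le
    simp only [hf_update]
    calc _ ≤ _ := sum_mixture_mul_iwSurrogate_le hp (sum_expWeights _ _) hθ hθ1 (hℓ t)
          (hη t).le i₀
      _ ≤ _ := by nlinarith [hC _ hp (sum_expWeights _ _), hη t]
  calc _ ≤ ∑ xs : Fin T → Fin K, pathProb (exp4mix θ ℓ η) T xs *
          (log N / η T + ∑ t ∈ range T, f t (extSeq xs)) :=
        Finset.sum_le_sum fun xs _ => mul_le_mul_of_nonneg_left
          (exp4_sum_le_sum_iwSurrogate hθ hℓ hη hη1 hanti _ T i₀)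
          (pathProb_nonneg (exp4mix_nonneg hθ) T xs)
    _ = log N / η T + ∑ xs : Fin T → Fin K, pathProb (exp4mix θ ℓ η) T xs *
          ∑ t ∈ range T, f t (extSeq xs) := by
        simp only [mul_add, Finset.sum_add_distrib, ← Finset.sum_mul,
          sum_pathProb hq (sum_exp4mix hθ1) T, one_mul]
    _ ≤ _ := by
        have := sum_pathProb_mul_sum_le hq (exp4mix_nonneg hθ) (sum_exp4mix hθ1) hf hcond T
        rw [Finset.sum_add_distrib, ← Finset.mul_sum] at this
        linarith

lemma exp4_expected_loss_eq_of_forall_eq (hθ1 : ∀ i, ∑ a, θ i a = 1) {i₀ : Fin N}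
    (hflat : ∀ i, θ i = θ i₀) (T : ℕ) :
    ∑ xs : Fin T → Fin K, pathProb (exp4mix θ ℓ η) T xs *
        ∑ t ∈ range T, ∑ i, exp4p θ ℓ η (extSeq xs) t i * ∑ a, θ i a * ℓ t a =
      ∑ t ∈ range T, ∑ a, θ i₀ a * ℓ t a := by
  have hround : ∀ x t, ∑ i, exp4p θ ℓ η x t i * ∑ a, θ i a * ℓ t a = ∑ a, θ i₀ a * ℓ t a :=
    fun x t => by
      rw [Finset.sum_congr rfl fun i _ => by rw [hflat i], ← Finset.sum_mul,
        exp4p_eq_expWeights, sum_expWeights, one_mul]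
  simp only [hround, ← Finset.sum_mul, sum_pathProb (dependsOn_exp4mix θ ℓ η) (sum_exp4mix hθ1),
    one_mul]

end Exp4Expectation

section LearningRate

lemma sum_range_inv_sqrt_le (T : ℕ) : ∑ t ∈ range T, 1 / √((t : ℝ) + 1) ≤ 2 * √(T : ℝ) := by
  induction T with
  | zero => simp
  | succ T ih =>
    rw [Finset.sum_range_succ, Nat.cast_succ]
    have hv : 0 < √((T : ℝ) + 1) := sqrt_pos.2 (by positivity)
    have hv2 : √((T : ℝ) + 1) ^ 2 = T + 1 := sq_sqrt (by positivity)
    have hu2 : √(T : ℝ) ^ 2 = T := sq_sqrt (by positivity)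
    have : 1 / √((T : ℝ) + 1) ≤ 2 * √((T : ℝ) + 1) - 2 * √(T : ℝ) := by
      rw [div_le_iff₀ hv]
      nlinarith [sq_nonneg (√((T : ℝ) + 1) - √(T : ℝ)), sqrt_nonneg (T : ℝ)]
    linarith

lemma sqrt_two_add_three_div_le_two : √2 + 3 / (2 * exp 1) ≤ 2 := by
  have h1 : √2 ≤ 1.41422 := (sqrt_le_left (by norm_num)).2 (by norm_num)
  have h2 : 3 / (2 * exp 1) ≤ 3 / (2 * 2.7182818283) := by
    gcongr; exact exp_one_gt_d9.le
  linarith [show (3 : ℝ) / (2 * 2.7182818283) ≤ 0.5519 by norm_num]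

/-- The rate `min {1, √(L / (e C t))}` at the 1-indexed round `t + 1`. -/
def learningRate (C L : ℝ) (t : ℕ) : ℝ := min 1 √(L / (exp 1 * C * (t + 1)))

variable {C L : ℝ}

lemma learningRate_pos (hC : 0 < C) (hL : 0 < L) (t : ℕ) : 0 < learningRate C L t :=
  lt_min one_pos (sqrt_pos.2 (by positivity))

lemma antitone_learningRate (hC : 0 < C) (hL : 0 < L) : Antitone (learningRate C L) :=
  fun _ _ hst => min_le_min le_rfl <| sqrt_le_sqrt <|
    div_le_div_of_nonneg_left hL.le (by positivity) (by gcongr)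

lemma div_learningRate_le (hC : 0 < C) (hL : 0 < L) {T : ℕ} (hT : T ≠ 0) :
    L / learningRate C L T ≤ √2 * max √(exp 1 * C * T * L) L := by
  set s := √(L / (exp 1 * C * (T + 1)))
  change L / min 1 s ≤ _
  have hs : 0 < s := sqrt_pos.2 (by positivity)
  have hT1 : (1 : ℝ) ≤ T := Nat.one_le_cast.2 (Nat.pos_of_ne_zero hT)
  rcases min_choice 1 s with h | h <;> rw [h]
  · rw [div_one]
    nlinarith [le_max_right √(exp 1 * C * T * L) L, one_le_sqrt.2 one_le_two]
  · have hLs : L / s = √(exp 1 * C * (T + 1) * L) := by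
      rw [eq_comm, sqrt_eq_iff_mul_self_eq (by positivity) (by positivity), div_mul_div_comm,
        mul_self_sqrt (by positivity)]
      field_simp
    calc L / s = √(exp 1 * C * (T + 1) * L) := hLs
      _ ≤ √(2 * (exp 1 * C * T * L)) :=
          sqrt_le_sqrt (by nlinarith [mul_pos (mul_pos (exp_pos 1) hC) hL])
      _ = √2 * √(exp 1 * C * T * L) := sqrt_mul zero_le_two _
      _ ≤ _ := by gcongr; exact le_max_left _ _

lemma mul_sum_learningRate_le (hC : 0 < C) (hL : 0 < L) (T : ℕ) :
    C * ∑ t ∈ range T, learningRate C L t ≤ 2 / exp 1 * √(exp 1 * C * T * L) := by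
  have hterm : ∀ t : ℕ, learningRate C L t ≤
      √(L / (exp 1 * C)) * (1 / √((t : ℝ) + 1)) := fun t => by
    rw [one_div, ← sqrt_inv, ← sqrt_mul (by positivity), ← div_eq_mul_inv, div_div]
    exact min_le_right _ _
  have hkey : C * √(L / (exp 1 * C)) * √(T : ℝ) = √(exp 1 * C * T * L) / exp 1 := by
    rw [eq_div_iff (exp_pos 1).ne', eq_comm, sqrt_eq_iff_mul_self_eq (by positivity)
      (by positivity)]
    have h1 := mul_self_sqrt (show 0 ≤ L / (exp 1 * C) by positivity)
    have h2 := mul_self_sqrt (show (0 : ℝ) ≤ T by positivity)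
    symm
    calc _ = C * C * exp 1 * exp 1 * (√(L / (exp 1 * C)) * √(L / (exp 1 * C))) *
          (√(T : ℝ) * √(T : ℝ)) := by ring
      _ = _ := by rw [h1, h2]; field_simp
  have hsum : ∑ t ∈ range T, learningRate C L t ≤
      √(L / (exp 1 * C)) * (2 * √(T : ℝ)) :=
    calc _ ≤ ∑ t ∈ range T, √(L / (exp 1 * C)) * (1 / √((t : ℝ) + 1)) :=
          Finset.sum_le_sum fun t _ => hterm t
      _ ≤ _ := by
          rw [← Finset.mul_sum]
          exact mul_le_mul_of_nonneg_left (sum_range_inv_sqrt_le T) (sqrt_nonneg _)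
  calc C * ∑ t ∈ range T, learningRate C L t
      ≤ C * (√(L / (exp 1 * C)) * (2 * √(T : ℝ))) := mul_le_mul_of_nonneg_left hsum hC.le
    _ = 2 * (C * √(L / (exp 1 * C)) * √(T : ℝ)) := by ring
    _ = 2 / exp 1 * √(exp 1 * C * T * L) := by rw [hkey]; ring

lemma div_learningRate_add_le (hC : 0 < C) (hL : 0 < L) {T : ℕ} (hT : T ≠ 0) :
    L / learningRate C L T + 3 / 4 * C * ∑ t ∈ range T, learningRate C L t ≤
      2 * max √(exp 1 * C * T * L) L := by
  set M := max √(exp 1 * C * T * L) L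
  have h1 := div_learningRate_le hC hL hT
  have h2 := mul_sum_learningRate_le hC hL T
  have h3 : 3 / 4 * (2 / exp 1 * √(exp 1 * C * T * L)) ≤ 3 / (2 * exp 1) * M := by
    rw [← mul_assoc, show 3 / 4 * (2 / exp 1) = 3 / (2 * exp 1) by field_simp; norm_num]
    exact mul_le_mul_of_nonneg_left (le_max_left _ _) (by positivity)
  have h4 := mul_le_mul_of_nonneg_right sqrt_two_add_three_div_le_two
    (hL.le.trans (le_max_right _ _) : 0 ≤ M)
  nlinarith

end LearningRate

/-- EXP4 on a fixed policy set of `N` distributions over `K` outcomes, run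
with learning rates `η t = min {1, √(log N / (e C(Θ) t))}` (1-indexed `t`), has expected
regret at most `2 max {√(e C(Θ) T log N), log N}` against any sequence of `[0,1]` losses,
where `C(Θ)` is the chi-squared capacity of the policy set. -/
theorem exp4_regret_capacity {N K : ℕ} [NeZero K] [NeZero N] (hN : 2 ≤ N)
    (θ : Fin N → Fin K → ℝ) (hθ0 : ∀ i a, 0 ≤ θ i a) (hθ1 : ∀ i, ∑ a, θ i a = 1)
    (ℓ : ℕ → Fin K → ℝ) (hℓ : ∀ t a, 0 ≤ ℓ t a ∧ ℓ t a ≤ 1)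
    (T : ℕ)
    (Cap : ℝ)
    (hCap : Cap = sSup {v : ℝ | ∃ τ : Fin N → ℝ, (∀ i, 0 ≤ τ i) ∧ (∑ i, τ i = 1) ∧
        v = ∑ i, τ i * ∑ a, (∑ j, τ j * θ j a) *
              (θ i a / (∑ j, τ j * θ j a) - 1) ^ 2})
    (η : ℕ → ℝ)
    (hη : ∀ t : ℕ, η t =
        min 1 (Real.sqrt (Real.log N / (Real.exp 1 * Cap * (t + 1))))) :
    (∑ xs : Fin T → Fin K,
        (∏ t : Fin T, exp4mix θ ℓ η (extSeq xs) t (xs t)) *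
          ∑ t : Fin T, ∑ i, exp4p θ ℓ η (extSeq xs) t i * ∑ a, θ i a * ℓ t a)
      - (univ.inf' univ_nonempty fun i : Fin N => ∑ t : Fin T, ∑ a, θ i a * ℓ t a)
      ≤ 2 * max (Real.sqrt (Real.exp 1 * Cap * T * Real.log N)) (Real.log N) := by
  obtain ⟨i₀, -, hinf⟩ := exists_mem_eq_inf' univ_nonempty
    fun i : Fin N => ∑ t : Fin T, ∑ a, θ i a * ℓ t a
  rw [hinf]
  change ∑ xs, pathProb (exp4mix θ ℓ η) T xs * _ - _ ≤ _
  have hlog : 0 < log N := log_pos (by exact_mod_cast hN)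
  replace hCap : Cap = chiSqCapacity θ := hCap
  rcases (chiSqCapacity_nonneg hθ0 hθ1).eq_or_lt with h0 | hCap0
  · have hloss := exp4_expected_loss_eq_of_forall_eq hθ1 (ℓ := ℓ) (η := η)
      (fun i => eq_of_chiSqCapacity_eq_zero hθ0 hθ1 h0.symm i i₀) T
    simp only [Finset.sum_range] at hloss
    rw [hloss, sub_self]
    exact mul_nonneg zero_le_two (hlog.le.trans (le_max_right _ _))
  rcases eq_or_ne T 0 with rfl | hT
  · simp
  rw [← hCap] at hCap0
  obtain rfl : η = learningRate Cap (log N) := funext hη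
  have hloss := exp4_expected_loss_le hθ0 hθ1 hℓ (learningRate_pos hCap0 hlog)
    (fun t => min_le_left _ _) (antitone_learningRate hCap0 hlog)
    (fun τ hτ hτ1 => hCap ▸ chiSqInfo_le_chiSqCapacity hτ hτ1 hθ0 hθ1) T i₀
  have hrate := div_learningRate_add_le hCap0 hlog hT
  simp only [Finset.sum_range] at hloss hrate
  linarith

end
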